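/- arXiv:1503.03280 — 2 statements merged into one kernel-verified Lean document; each statement's English description precedes it below -/
import Mathlib

section
/- Let L be an 𝒪_F-lattice chain in V and g ∈ G = GL_F(V). Then g·𝔄(L)·g⁻¹ = 𝔄(L) if and only if there exists an integer k ∈ ℤ such that g(L(i)) = L(i+k) for all i ∈ ℤ. -/
/-!
Context: `F` is a nonarchimedean local field, modelled as a field together with a
valuation subring `OF` which is a discrete valuation ring with finite residue field,
with a fixed uniformizer `ϖF` (an irreducible element of `OF`).  `V` is a nonzero
finite-dimensional `F`-vector space, `A = End_F V` and `G = GL_F(V) = (End_F V)ˣ`.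
-/

noncomputable section

variable {F : Type*} [Field F] {V : Type*} [AddCommGroup V] [Module F V]

/-- A subring of `F` acts on any `F`-vector space by restriction of scalars. -/
instance (priority := 100) ValuationSubring.instModuleOfModule (O : ValuationSubring F) :
    Module O V :=
  Module.compHom V O.subtype

/-- `L : ℤ → Submodule 𝒪 V` is an `𝒪`-lattice chain of period `e` : each `L i` is a
finitely generated `𝒪`-submodule spanning `V` over `F` (an `𝒪`-lattice), the chain is
strictly decreasing, and `ϖ • L i = L (i + e)` for all `i`. -/
structure IsLatticeChain (O : ValuationSubring F) (ϖ : O) (L : ℤ → Submodule O V) (e : ℕ) :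
    Prop where
  period_pos : 0 < e
  fg : ∀ i, (L i).FG
  spans : ∀ i, Submodule.span F ((L i : Set V)) = ⊤
  strict : ∀ i, L (i + 1) < L i
  smul_eq : ∀ (i : ℤ) (x : V), x ∈ L (i + e) ↔ ∃ y ∈ L i, x = (ϖ : F) • y

/-- The hereditary order `𝔄(L) = {a ∈ End_F V : a (L i) ⊆ L i for all i}`. -/
def hereditaryOrder (O : ValuationSubring F) (L : ℤ → Submodule O V) :
    Subring (Module.End F V) where
  carrier := {a | ∀ i, ∀ x ∈ L i, a x ∈ L i}
  zero_mem' := fun i x _ => by simpa using (L i).zero_mem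
  one_mem' := fun i x hx => by simpa using hx
  add_mem' := fun {a b} ha hb i x hx => by
    simpa using (L i).add_mem (ha i x hx) (hb i x hx)
  neg_mem' := fun {a} ha i x hx => by simpa using (L i).neg_mem (ha i x hx)
  mul_mem' := fun {a b} ha hb i x hx => by
    simpa [Module.End.mul_apply] using ha i _ (hb i x hx)

lemma mem_hereditaryOrder {O : ValuationSubring F} {L : ℤ → Submodule O V}
    {a : Module.End F V} :
    a ∈ hereditaryOrder O L ↔ ∀ i, ∀ x ∈ L i, a x ∈ L i := Iff.rfl

/-- The radical `𝔓(L) = {a ∈ End_F V : a (L i) ⊆ L (i+1) for all i}`, as a set. -/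
def radicalSet (O : ValuationSubring F) (L : ℤ → Submodule O V) :
    Set (Module.End F V) :=
  {a | ∀ i, ∀ x ∈ L i, a x ∈ L (i + 1)}

/-- The unit group `U(𝔄(L)) = 𝔄(L)ˣ` of the hereditary order, as a set of
endomorphisms: the elements of `𝔄(L)` invertible in `𝔄(L)`. -/
def orderUnits (O : ValuationSubring F) (L : ℤ → Submodule O V) :
    Set (Module.End F V) :=
  {a | a ∈ hereditaryOrder O L ∧ ∃ b ∈ hereditaryOrder O L, a * b = 1 ∧ b * a = 1}

/-- The unit group `U(𝔄(L)) = 𝔄(L)ˣ`, as a subgroup of `G = GL_F(V)`. -/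
def unitGroup (O : ValuationSubring F) (L : ℤ → Submodule O V) :
    Subgroup (Module.End F V)ˣ where
  carrier := {u | ↑u ∈ hereditaryOrder O L ∧ ↑u⁻¹ ∈ hereditaryOrder O L}
  one_mem' := ⟨one_mem _, by simpa using one_mem (hereditaryOrder O L)⟩
  mul_mem' := fun {a b} ha hb => ⟨mul_mem ha.1 hb.1, by
    rw [mul_inv_rev]; exact mul_mem hb.2 ha.2⟩
  inv_mem' := fun {a} ha => ⟨ha.2, by simpa using ha.1⟩

lemma mem_unitGroup {O : ValuationSubring F} {L : ℤ → Submodule O V}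
    {u : (Module.End F V)ˣ} :
    u ∈ unitGroup O L ↔
      (u : Module.End F V) ∈ hereditaryOrder O L ∧
        ((u⁻¹ : (Module.End F V)ˣ) : Module.End F V) ∈ hereditaryOrder O L := Iff.rfl

/-- Conjugation `g S g⁻¹` of a set of endomorphisms by an element `g ∈ GL_F(V)`. -/
def conjIm (g : (Module.End F V)ˣ) (S : Set (Module.End F V)) : Set (Module.End F V) :=
  (fun a => (g : Module.End F V) * a * ((g⁻¹ : (Module.End F V)ˣ) : Module.End F V)) '' S

lemma IsLatticeChain.antitone {O : ValuationSubring F} {ϖ : O} {L : ℤ → Submodule O V}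
    {e : ℕ} (hL : IsLatticeChain O ϖ L e) : Antitone L :=
  antitone_int_of_succ_le fun i => (hL.strict i).le

lemma IsLatticeChain.smul_mem_succ {O : ValuationSubring F} {ϖ : O} {L : ℤ → Submodule O V}
    {e : ℕ} (hL : IsLatticeChain O ϖ L e) (i : ℤ) {x : V} (hx : x ∈ L i) :
    (ϖ : F) • x ∈ L (i + 1) := by
  have h1 : (ϖ : F) • x ∈ L (i + e) := (hL.smul_eq i _).2 ⟨x, hx, rfl⟩
  have h2 : (i + 1 : ℤ) ≤ i + e := by have := hL.period_pos; omega
  exact hL.antitone h2 h1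

variable [FiniteDimensional F V] [Nontrivial V]
variable (OF : ValuationSubring F) [IsDiscreteValuationRing OF]
  [Finite (IsLocalRing.ResidueField OF)] (ϖF : OF)

/-!
If `g` normalizes `𝔄(L)`, every `g L(i)` is a lattice stable under `𝔄(L)`, and every nonzero
finitely generated `𝔄(L)`-stable `𝒪`-submodule `M` is one of the `L(j)`: take `j` maximal with
`M ⊆ L(j)` and `x ∈ M \ L(j+1)`. Then `x` is primitive in the lattice `ϖ⁻¹ L(j+1)`, so some
linear form `φ` is integral on that lattice with `φ x = 1`, and `v ↦ φ v • y` lies in `𝔄(L)` for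
every `y ∈ L(j)`; hence `L(j) ⊆ M`. Thus `g` and `g⁻¹` permute the `L(i)`, inducing an
order-preserving bijection of `ℤ`, which must be a translation. The converse is a direct check.
-/

section

omit [FiniteDimensional F V] [Nontrivial V]

variable {O : ValuationSubring F} {ϖ : O}

instance ValuationSubring.instIsScalarTowerOfModule (O : ValuationSubring F) :
    IsScalarTower O F V :=
  ⟨fun c f v => mul_smul (c : F) f v⟩

lemma ValuationSubring.exists_pow_mul_mem [IsDiscreteValuationRing O] (hϖ : Irreducible ϖ)
    (f : F) : ∃ n : ℕ, (ϖ : F) ^ n * f ∈ O := by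
  rcases O.mem_or_inv_mem f with hf | hf
  · exact ⟨0, by simpa using hf⟩
  rcases eq_or_ne f 0 with rfl | hf0
  · exact ⟨0, by simp⟩
  have hne : (⟨f⁻¹, hf⟩ : O) ≠ 0 := fun h => hf0 (inv_eq_zero.1 (congrArg Subtype.val h))
  obtain ⟨n, u, hu⟩ := IsDiscreteValuationRing.associated_pow_irreducible hne hϖ
  refine ⟨n, ?_⟩
  have hu' : f⁻¹ * (u : F) = (ϖ : F) ^ n := congrArg Subtype.val hu
  rw [← hu', mul_comm, ← mul_assoc, mul_inv_cancel₀ hf0, one_mul]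
  exact (u : O).2

lemma ValuationSubring.exists_zpow_neg_mul_not_mem [IsDiscreteValuationRing O]
    (hϖ : Irreducible ϖ) {c : F} (hc : c ≠ 0) : ∃ n : ℕ, (ϖ : F) ^ (-(n : ℤ)) * c ∉ O := by
  have hϖ0 : (ϖ : F) ≠ 0 := by exact_mod_cast hϖ.ne_zero
  obtain ⟨n, hn⟩ := O.exists_pow_mul_mem hϖ c⁻¹
  refine ⟨n + 1, fun h => hϖ.not_isUnit (IsUnit.of_mul_eq_one ⟨_, O.mul_mem _ _ h hn⟩ ?_)⟩
  apply Subtype.ext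
  simp only [OneMemClass.coe_one, MulMemClass.coe_mul]
  rw [zpow_neg, zpow_natCast]
  field_simp
  ring

lemma ValuationSubring.inv_mem_of_inv_mul_not_mem [IsDiscreteValuationRing O]
    (hϖ : Irreducible ϖ) {c : F} (hc : c ∈ O) (h : (ϖ : F)⁻¹ * c ∉ O) : c⁻¹ ∈ O := by
  by_contra hinv
  have hmax : (⟨c, hc⟩ : O) ∈ IsLocalRing.maximalIdeal O := by
    rintro ⟨u, hu⟩
    have hu' : (((u⁻¹ : Oˣ) : O) : F) * c = 1 := by
      rw [← show ((u : O) : F) = c from congrArg Subtype.val hu]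
      exact congrArg Subtype.val u.inv_mul
    exact hinv (eq_inv_of_mul_eq_one_left hu' ▸ (u⁻¹ : Oˣ).val.2)
  obtain ⟨d, hd⟩ := Ideal.mem_span_singleton'.1 (hϖ.maximalIdeal_eq ▸ hmax)
  have hd' : (d : F) * ϖ = c := congrArg Subtype.val hd
  have hϖ0 : (ϖ : F) ≠ 0 := by exact_mod_cast hϖ.ne_zero
  exact h (by rw [← hd', mul_comm, mul_inv_cancel_right₀ hϖ0]; exact d.2)

lemma Module.Basis.extendOfIsLattice_repr {R K W : Type*} [CommRing R] [Field K] [Algebra R K]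
    [IsFractionRing R K] [AddCommGroup W] [Module K W] [Module R W] [IsScalarTower R K W]
    {κ : Type*} {M : Submodule R W} [M.IsLattice K] (b : Module.Basis κ R M) (z : M) (k : κ) :
    (b.extendOfIsLattice K).repr z k = algebraMap R K (b.repr z k) := by
  have key := b.ext (f₁ := ((b.extendOfIsLattice K).coord k).restrictScalars R ∘ₗ M.subtype)
    (f₂ := Algebra.linearMap R K ∘ₗ b.coord k) fun k' => by
      simp only [LinearMap.comp_apply, Submodule.subtype_apply, LinearMap.restrictScalars_apply,
        ← b.extendOfIsLattice_apply K, Module.Basis.coord_apply, Module.Basis.repr_self]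
      by_cases h : k' = k <;> simp [h]
  simpa using LinearMap.congr_fun key z

lemma Submodule.IsLattice.mem_iff_forall_repr_mem {κ : Type*} {M : Submodule O V}
    [M.IsLattice F] (b : Module.Basis κ O M) (z : V) :
    z ∈ M ↔ ∀ k, (b.extendOfIsLattice F).repr z k ∈ O := by
  refine ⟨fun hz k => ?_, fun hz => ?_⟩
  · rw [show z = ((⟨z, hz⟩ : M) : V) from rfl, b.extendOfIsLattice_repr]
    exact (b.repr _ k).2
  · rw [← (b.extendOfIsLattice F).linearCombination_repr z, Finsupp.linearCombination_apply]
    refine Submodule.sum_mem _ fun k _ => ?_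
    simp only [Module.Basis.extendOfIsLattice_apply]
    exact M.smul_mem ⟨_, hz k⟩ (b k).2

lemma Submodule.IsLattice.exists_dual_apply_eq_one [IsDiscreteValuationRing O]
    (hϖ : Irreducible ϖ) {M : Submodule O V} [M.IsLattice F] {x : V} (hx : x ∈ M)
    (hx' : (ϖ : F)⁻¹ • x ∉ M) : ∃ φ : Module.Dual F V, φ x = 1 ∧ ∀ z ∈ M, φ z ∈ O := by
  let B := (Module.Free.chooseBasis O M).extendOfIsLattice F
  have hmem := Submodule.IsLattice.mem_iff_forall_repr_mem (Module.Free.chooseBasis O M)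
  obtain ⟨k, hk⟩ : ∃ k, (ϖ : F)⁻¹ * B.repr x k ∉ O := by
    by_contra! h
    exact hx' ((hmem _).2 fun k => by simpa using h k)
  have hc0 : B.repr x k ≠ 0 := fun h0 => hk (by simp [h0, O.zero_mem])
  refine ⟨(B.repr x k)⁻¹ • B.coord k, by simp [hc0], fun z hz => ?_⟩
  simpa using O.mul_mem _ _ (O.inv_mem_of_inv_mul_not_mem hϖ ((hmem x).1 hx k) hk)
    ((hmem z).1 hz k)

lemma Int.eq_add_of_strictMono_of_surjective {σ : ℤ → ℤ} (hmono : StrictMono σ)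
    (hsurj : Function.Surjective σ) (i : ℤ) : σ i = i + σ 0 := by
  have hsucc : ∀ i, σ (i + 1) = σ i + 1 := fun i => by
    obtain ⟨j, hj⟩ := hsurj (σ i + 1)
    have hij : i < j := hmono.lt_iff_lt.1 (by omega)
    have := hmono.monotone (show i + 1 ≤ j by omega)
    have := hmono (lt_add_one i)
    omega
  induction i using Int.induction_on with
  | zero => simp
  | succ n ih => rw [hsucc, ih]; ring
  | pred n ih =>
    have := hsucc (-n - 1)
    rw [sub_add_cancel] at this
    omega

lemma conjIm_eq_self_iff (g : (Module.End F V)ˣ) (S : Set (Module.End F V)) :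
    conjIm g S = S ↔ (∀ a ∈ S, ↑g * a * ↑g⁻¹ ∈ S) ∧ ∀ a ∈ S, ↑g⁻¹ * a * ↑g ∈ S := by
  refine ⟨fun h => ⟨fun a ha => h ▸ ⟨a, ha, rfl⟩, fun a ha => ?_⟩, fun ⟨h₁, h₂⟩ => ?_⟩
  · obtain ⟨b, hb, rfl⟩ := h.symm.subset ha
    simpa [mul_assoc] using hb
  · exact (Set.image_subset_iff.2 h₁).antisymm fun a ha => ⟨_, h₂ a ha, by simp [mul_assoc]⟩

variable {L : ℤ → Submodule O V} {e : ℕ}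

lemma conj_mem_hereditaryOrder_of_image_eq {g : (Module.End F V)ˣ} {k : ℤ}
    (hk : ∀ i, (fun v => (g : Module.End F V) v) '' (L i : Set V) = (L (i + k) : Set V))
    {a : Module.End F V} (ha : a ∈ hereditaryOrder O L) :
    ↑g * a * ↑g⁻¹ ∈ hereditaryOrder O L ∧ ↑g⁻¹ * a * ↑g ∈ hereditaryOrder O L := by
  have hg : ∀ i, ∀ x ∈ L i, (g : Module.End F V) x ∈ L (i + k) :=
    fun i x hx => (hk i).subset ⟨x, hx, rfl⟩
  have hg' : ∀ i, ∀ x ∈ L (i + k), (↑g⁻¹ : Module.End F V) x ∈ L i := fun i x hx => by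
    obtain ⟨w, hw, rfl⟩ := (hk i).symm.subset hx
    rwa [← Module.End.mul_apply, Units.inv_mul, Module.End.one_apply]
  refine ⟨fun i x hx => ?_, fun i x hx => hg' i _ (ha _ _ (hg i x hx))⟩
  simpa using hg (i - k) _ (ha _ _ (hg' (i - k) x (by simpa using hx)))

namespace IsLatticeChain

lemma strictAnti (hL : IsLatticeChain O ϖ L e) : StrictAnti L :=
  strictAnti_int_of_succ_lt hL.strict

lemma isLattice (hL : IsLatticeChain O ϖ L e) (i : ℤ) : (L i).IsLattice F :=
  ⟨hL.fg i, hL.spans i⟩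

lemma ne_bot [Nontrivial V] (hL : IsLatticeChain O ϖ L e) (i : ℤ) : L i ≠ ⊥ := by
  intro h
  have := hL.spans i
  rw [h, Submodule.bot_coe, Submodule.span_zero_singleton] at this
  exact bot_ne_top this

lemma zpow_smul_mem_iff (hL : IsLatticeChain O ϖ L e) (hϖ : ϖ ≠ 0) (q i : ℤ) (y : V) :
    (ϖ : F) ^ q • y ∈ L (i + q * e) ↔ y ∈ L i := by
  have hϖ0 : (ϖ : F) ≠ 0 := by exact_mod_cast hϖ
  have smul_mem_iff : ∀ i (y : V), (ϖ : F) • y ∈ L (i + e) ↔ y ∈ L i := fun i y => by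
    rw [hL.smul_eq]
    exact ⟨fun ⟨z, hz, h⟩ => smul_right_injective V hϖ0 h ▸ hz, fun hy => ⟨y, hy, rfl⟩⟩
  induction q using Int.induction_on generalizing i y with
  | zero => simp
  | succ n ih =>
    rw [zpow_add_one₀ hϖ0, mul_smul, show i + (n + 1) * e = i + e + n * e by ring]
    exact (ih _ _).trans (smul_mem_iff _ _)
  | pred n ih =>
    rw [← smul_mem_iff, ← mul_smul, ← zpow_one_add₀ hϖ0, show 1 + (-n - 1 : ℤ) = -n by ring,
      show i + (-n - 1) * e + e = i + -n * e by ring]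
    exact ih i y

lemma mem_add_mul_iff (hL : IsLatticeChain O ϖ L e) (hϖ : ϖ ≠ 0) (q i : ℤ) (x : V) :
    x ∈ L (i + q * e) ↔ ∃ y ∈ L i, x = (ϖ : F) ^ q • y := by
  have hϖ0 : (ϖ : F) ≠ 0 := by exact_mod_cast hϖ
  refine ⟨fun hx => ⟨(ϖ : F) ^ (-q) • x, ?_, ?_⟩, fun ⟨y, hy, hxy⟩ => ?_⟩
  · rw [← hL.zpow_smul_mem_iff hϖ q, smul_smul, ← zpow_add₀ hϖ0, add_neg_cancel, zpow_zero,
      one_smul]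
    exact hx
  · rw [smul_smul, ← zpow_add₀ hϖ0, add_neg_cancel, zpow_zero, one_smul]
  · exact hxy ▸ (hL.zpow_smul_mem_iff hϖ q i y).2 hy

lemma smulRight_mem_hereditaryOrder (hL : IsLatticeChain O ϖ L e) (hϖ : ϖ ≠ 0) {k : ℤ}
    {φ : Module.Dual F V} (hφ : ∀ z ∈ L k, φ z ∈ O) {y : V} (hy : y ∈ L (k + e - 1)) :
    φ.smulRight y ∈ hereditaryOrder O L := by
  intro i z hz
  have he : (0 : ℤ) < e := by exact_mod_cast hL.period_pos
  -- `L i ⊆ ϖ ^ q • L k` and `ϖ ^ q • L (k + e - 1) ⊆ L i`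
  set q := (i - k) / e
  have hq₁ : q * e ≤ i - k := Int.ediv_mul_le _ he.ne'
  have hq₂ : i - k < (q + 1) * e := Int.lt_ediv_add_one_mul_self _ he
  obtain ⟨w, hw, rfl⟩ := (hL.mem_add_mul_iff hϖ q k z).1 (hL.antitone (by omega) hz)
  have hqy : (ϖ : F) ^ q • y ∈ L i :=
    hL.antitone (by linarith) ((hL.mem_add_mul_iff hϖ q _ _).2 ⟨y, hy, rfl⟩)
  rw [LinearMap.smulRight_apply, map_smul, smul_eq_mul, mul_comm, mul_smul]
  exact (L i).smul_mem ⟨_, hφ w hw⟩ hqy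

lemma exists_map_eq_add (hL : IsLatticeChain O ϖ L e) (f : V ≃ₗ[O] V)
    (hf : ∀ i, ∃ j, (L i).map (f : V →ₗ[O] V) = L j)
    (hf' : ∀ i, ∃ j, (L i).map (f.symm : V →ₗ[O] V) = L j) :
    ∃ k, ∀ i, (L i).map (f : V →ₗ[O] V) = L (i + k) := by
  choose σ hσ using hf
  choose τ hτ using hf'
  have hmono : StrictMono σ := fun i j hij => hL.strictAnti.lt_iff_gt.1 <| by
    rw [← hσ, ← hσ]
    exact Submodule.map_strictMono_of_injective f.injective (hL.strictAnti hij)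
  have hsurj : Function.Surjective σ := fun j =>
    ⟨τ j, hL.strictAnti.injective (by rw [← hσ, (Submodule.map_symm_eq_iff f).1 (hτ j)])⟩
  exact ⟨σ 0, fun i => by rw [hσ, Int.eq_add_of_strictMono_of_surjective hmono hsurj]⟩

variable [IsDiscreteValuationRing O]

lemma exists_mem (hL : IsLatticeChain O ϖ L e) (hϖ : Irreducible ϖ) (v : V) :
    ∃ j, v ∈ L j := by
  have hv : v ∈ Submodule.span F (L 0 : Set V) := hL.spans 0 ▸ Submodule.mem_top
  induction hv using Submodule.span_induction with
  | mem x hx => exact ⟨0, hx⟩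
  | zero => exact ⟨0, zero_mem _⟩
  | add x y _ _ hx hy =>
    obtain ⟨i, hi⟩ := hx
    obtain ⟨j, hj⟩ := hy
    exact ⟨min i j, add_mem (hL.antitone (min_le_left i j) hi)
      (hL.antitone (min_le_right i j) hj)⟩
  | smul f x _ hx =>
    obtain ⟨j, hj⟩ := hx
    obtain ⟨n, hn⟩ := O.exists_pow_mul_mem hϖ f
    have hϖ0 : (ϖ : F) ≠ 0 := by exact_mod_cast hϖ.ne_zero
    refine ⟨j + -n * e, (hL.mem_add_mul_iff hϖ.ne_zero _ _ _).2
      ⟨(⟨_, hn⟩ : O) • x, Submodule.smul_mem _ _ hj, ?_⟩⟩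
    change f • x = (ϖ : F) ^ (-n : ℤ) • ((ϖ : F) ^ n * f) • x
    rw [smul_smul, zpow_neg, zpow_natCast, inv_mul_cancel_left₀ (pow_ne_zero n hϖ0)]

lemma exists_le_of_fg (hL : IsLatticeChain O ϖ L e) (hϖ : Irreducible ϖ)
    {M : Submodule O V} (hM : M.FG) : ∃ j, M ≤ L j := by
  obtain ⟨s, rfl⟩ := hM
  choose j hj using hL.exists_mem hϖ
  obtain ⟨m, hm⟩ := (s.finite_toSet.image j).bddBelow
  exact ⟨m, Submodule.span_le.2 fun x hx => hL.antitone (hm ⟨x, hx, rfl⟩) (hj x)⟩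

lemma exists_not_mem (hL : IsLatticeChain O ϖ L e) (hϖ : Irreducible ϖ) {v : V} (hv : v ≠ 0) :
    ∃ j, v ∉ L j := by
  have := hL.isLattice 0
  let B := (Module.Free.chooseBasis O (L 0)).extendOfIsLattice F
  have hmem := Submodule.IsLattice.mem_iff_forall_repr_mem (Module.Free.chooseBasis O (L 0))
  obtain ⟨k, hk⟩ : ∃ k, B.repr v k ≠ 0 := by
    by_contra! h
    exact hv (B.repr.injective (by ext k; simpa using h k))
  obtain ⟨n, hn⟩ := O.exists_zpow_neg_mul_not_mem hϖ hk
  refine ⟨0 + n * e, fun hv' => hn ?_⟩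
  obtain ⟨w, hw, rfl⟩ := (hL.mem_add_mul_iff hϖ.ne_zero n 0 v).1 hv'
  have hϖ0 : (ϖ : F) ≠ 0 := by exact_mod_cast hϖ.ne_zero
  rw [map_smul, Finsupp.smul_apply, smul_eq_mul, ← mul_assoc, ← zpow_add₀ hϖ0, neg_add_cancel,
    zpow_zero, one_mul]
  exact (hmem w).1 hw k

lemma exists_mem_hereditaryOrder_apply_eq (hL : IsLatticeChain O ϖ L e) (hϖ : Irreducible ϖ)
    {j : ℤ} {x y : V} (hx : x ∈ L j) (hx' : x ∉ L (j + 1)) (hy : y ∈ L j) :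
    ∃ a ∈ hereditaryOrder O L, a x = y := by
  have he := hL.period_pos
  -- `L (j + 1) = ϖ • L k`, so `x` is not divisible by `ϖ` in `L k ⊇ L j`
  set k := j + 1 - e
  have := hL.isLattice k
  have hxk : (ϖ : F)⁻¹ • x ∉ L k := fun h => hx' <| by
    have hϖ0 : (ϖ : F) ≠ 0 := by exact_mod_cast hϖ.ne_zero
    simpa [k, smul_smul, hϖ0] using (hL.smul_eq k _).2 ⟨_, h, rfl⟩
  obtain ⟨φ, hφx, hφ⟩ :=
    Submodule.IsLattice.exists_dual_apply_eq_one hϖ (hL.antitone (by omega) hx) hxk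
  exact ⟨φ.smulRight y, hL.smulRight_mem_hereditaryOrder hϖ.ne_zero hφ (by simpa [k] using hy),
    by simp [hφx]⟩

lemma exists_eq_of_forall_mem_hereditaryOrder (hL : IsLatticeChain O ϖ L e)
    (hϖ : Irreducible ϖ) {M : Submodule O V} (hM : M.FG) (hM₀ : M ≠ ⊥)
    (hstab : ∀ a ∈ hereditaryOrder O L, ∀ z ∈ M, a z ∈ M) : ∃ j, M = L j := by
  obtain ⟨x, hxM, hx₀⟩ := Submodule.exists_mem_ne_zero_of_ne_bot hM₀
  obtain ⟨J, hJ⟩ := hL.exists_not_mem hϖ hx₀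
  obtain ⟨j, hMj, hmax⟩ := Int.exists_greatest_of_bdd (P := fun j => M ≤ L j)
    ⟨J, fun z hz => not_lt.1 fun hJz => hJ (hL.antitone hJz.le (hz hxM))⟩
    (hL.exists_le_of_fg hϖ hM)
  obtain ⟨x', hx'M, hx'⟩ := SetLike.not_le_iff_exists.1 fun h : M ≤ L (j + 1) => by
    have := hmax _ h
    omega
  refine ⟨j, le_antisymm hMj fun y hy => ?_⟩
  obtain ⟨a, ha, rfl⟩ := hL.exists_mem_hereditaryOrder_apply_eq hϖ (hMj hx'M) hx' hy
  exact hstab a ha _ hx'M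

lemma exists_map_eq [Nontrivial V] (hL : IsLatticeChain O ϖ L e) (hϖ : Irreducible ϖ)
    {g : (Module.End F V)ˣ}
    (hg : ∀ a ∈ hereditaryOrder O L, ↑g⁻¹ * a * ↑g ∈ hereditaryOrder O L) (i : ℤ) :
    ∃ j, (L i).map
      ((LinearMap.GeneralLinearGroup.toLinearEquiv g).restrictScalars O : V →ₗ[O] V) = L j := by
  refine hL.exists_eq_of_forall_mem_hereditaryOrder hϖ ((hL.fg i).map _)
    (Submodule.map_eq_bot_iff.not.2 (hL.ne_bot i)) ?_
  rintro a ha _ ⟨w, hw, rfl⟩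
  refine ⟨(↑g⁻¹ * a * ↑g) w, hg a ha i w hw, ?_⟩
  change (↑g * (↑g⁻¹ * a * ↑g) : Module.End F V) w = (a * ↑g) w
  rw [mul_assoc, Units.mul_inv_cancel_left]

end IsLatticeChain

end

/-- `g ∈ G` normalizes `𝔄(L)` iff `g` shifts the chain `L` by some
integer `k`: `g (L i) = L (i + k)` for all `i`. -/
theorem normalizes_hereditaryOrder_iff_shifts
    (hϖF : Irreducible ϖF)
    (L : ℤ → Submodule OF V) (e : ℕ) (hL : IsLatticeChain OF ϖF L e)
    (g : (Module.End F V)ˣ) :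
    conjIm g (hereditaryOrder OF L : Set (Module.End F V))
        = (hereditaryOrder OF L : Set (Module.End F V))
      ↔ ∃ k : ℤ, ∀ i, (fun v => (g : Module.End F V) v) '' (L i : Set V)
          = (L (i + k) : Set V) := by
  rw [conjIm_eq_self_iff]
  constructor
  · rintro ⟨h₁, h₂⟩
    obtain ⟨k, hk⟩ := hL.exists_map_eq_add _ (hL.exists_map_eq hϖF h₂)
      (hL.exists_map_eq hϖF (g := g⁻¹) (by simpa using h₁))
    exact ⟨k, fun i => by rw [← hk]; rfl⟩
  · rintro ⟨k, hk⟩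
    exact ⟨fun a ha => (conj_mem_hereditaryOrder_of_image_eq hk ha).1,
      fun a ha => (conj_mem_hereditaryOrder_of_image_eq hk ha).2⟩

end
end

section
/- Let M and M′ be 𝒪_E-lattice chains in V, viewed by restriction of scalars also as 𝒪_F-lattice chains, with attached 𝒪_F-hereditary orders 𝔄(M), 𝔄(M′) and 𝒪_E-hereditary orders 𝔅(M), 𝔅(M′). If 𝔄(M) = 𝔄(M′) then 𝔅(M) = 𝔅(M′); that is, the map 𝔅 ↦ 𝔄(𝔅) from 𝒪_E-hereditary orders in B to 𝒪_F-hereditary orders in A is injective. Moreover this map is G_E-equivariant: for all h ∈ G_E, 𝔄(h·M) = h·𝔄(M)·h⁻¹, where (h·M)(i) = h(M(i)). -/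
/-!
Context: `F` is a nonarchimedean local field, modelled as a field together with a
valuation subring `OF` which is a discrete valuation ring with finite residue field,
with a fixed uniformizer `ϖF` (an irreducible element of `OF`).  `V` is a nonzero
finite-dimensional `F`-vector space, `A = End_F V` and `G = GL_F(V) = (End_F V)ˣ`.
-/

noncomputable section

variable {F : Type*} [Field F] {V : Type*} [AddCommGroup V] [Module F V]

variable {E : Type*} [Field E] [Algebra F E]

/-- Restriction of scalars of a submodule, along compatible valuation subrings
`𝒪_F ⊆ F` and `𝒪_E ⊆ E` of a field extension `E/F`. -/
def Submodule.restrictVS {W : Type*} [AddCommGroup W] [Module F W] [Module E W]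
    [IsScalarTower F E W] {OF : ValuationSubring F} {OE : ValuationSubring E}
    (hcomp : ∀ x : F, x ∈ OF → algebraMap F E x ∈ OE)
    (N : Submodule OE W) : Submodule OF W where
  carrier := N
  add_mem' := fun ha hb => N.add_mem ha hb
  zero_mem' := N.zero_mem
  smul_mem' := fun c x hx => by
    show (c : F) • x ∈ N
    rw [← algebraMap_smul E (c : F) x]
    exact N.smul_mem (⟨algebraMap F E (c : F), hcomp c c.2⟩ : OE) hx

/-- Restriction of scalars `B = End_E(V) → A = End_F(V)`, as a ring homomorphism;
its range is the centralizer `B ⊆ A`. -/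
def endRestrict (F : Type*) {E V : Type*} [Field F] [Field E] [Algebra F E]
    [AddCommGroup V] [Module F V] [Module E V] [IsScalarTower F E V] :
    Module.End E V →+* Module.End F V where
  toFun f := LinearMap.restrictScalars F f
  map_one' := rfl
  map_mul' := fun _ _ => rfl
  map_zero' := rfl
  map_add' := fun _ _ => rfl

/-- Restriction of scalars on general linear groups, `G_E = GL_E(V) → G = GL_F(V)`;
its range is the subgroup `G_E ⊆ G`. -/
def unitRestrict (F : Type*) {E V : Type*} [Field F] [Field E] [Algebra F E]
    [AddCommGroup V] [Module F V] [Module E V] [IsScalarTower F E V] :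
    (Module.End E V)ˣ →* (Module.End F V)ˣ :=
  Units.map (endRestrict F (E := E) (V := V)).toMonoidHom

/-- The image `h (N)` of an `𝒪_E`-submodule of `V` under an `E`-linear endomorphism. -/
def mapChain [Module E V] {OE : ValuationSubring E}
    (h : Module.End E V) (N : Submodule OE V) : Submodule OE V where
  carrier := h '' N
  add_mem' := fun {x y} hx hy => by
    obtain ⟨a, ha, rfl⟩ := hx
    obtain ⟨b, hb, rfl⟩ := hy
    exact ⟨a + b, N.add_mem ha hb, map_add h a b⟩
  zero_mem' := ⟨0, N.zero_mem, map_zero h⟩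
  smul_mem' := fun c x hx => by
    obtain ⟨a, ha, rfl⟩ := hx
    refine ⟨c • a, N.smul_mem c ha, ?_⟩
    show h ((c : E) • a) = (c : E) • h a
    exact map_smul h (c : E) a

variable [FiniteDimensional F V] [Nontrivial V]
variable (OF : ValuationSubring F) [IsDiscreteValuationRing OF]
  [Finite (IsLocalRing.ResidueField OF)] (ϖF : OF)

variable [FiniteDimensional F E] [Module E V] [IsScalarTower F E V]
variable (OE : ValuationSubring E) [IsDiscreteValuationRing OE] (ϖE : OE)

omit [FiniteDimensional F V] [Nontrivial V] in
lemma mem_image_units_iff (u : (Module.End F V)ˣ) {S : Set V} {y : V} :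
    y ∈ (u : Module.End F V) '' S ↔ ((u⁻¹ : (Module.End F V)ˣ) : Module.End F V) y ∈ S := by
  constructor
  · rintro ⟨x, hx, rfl⟩
    simpa [← Module.End.mul_apply] using hx
  · intro hy
    exact ⟨_, hy, by simp [← Module.End.mul_apply]⟩

omit [FiniteDimensional F V] [Nontrivial V] in
lemma mem_conjIm_iff (g : (Module.End F V)ˣ) {S : Set (Module.End F V)}
    {a : Module.End F V} :
    a ∈ conjIm g S ↔ ((g⁻¹ : (Module.End F V)ˣ) : Module.End F V) * a * g ∈ S := by
  constructor
  · rintro ⟨b, hb, rfl⟩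
    simpa [mul_assoc] using hb
  · intro ha
    exact ⟨_, ha, by simp [mul_assoc]⟩

omit [FiniteDimensional F V] [Nontrivial V] in
lemma hereditaryOrder_eq_conjIm_of_image {O : ValuationSubring F} (g : (Module.End F V)ˣ)
    {L L' : ℤ → Submodule O V} (hL' : ∀ i, (L' i : Set V) = (g : Module.End F V) '' L i) :
    (hereditaryOrder O L' : Set (Module.End F V)) = conjIm g (hereditaryOrder O L) := by
  ext a
  rw [mem_conjIm_iff, SetLike.mem_coe, SetLike.mem_coe, mem_hereditaryOrder, mem_hereditaryOrder]
  refine forall_congr' fun i => ?_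
  change (∀ x ∈ (L' i : Set V), a x ∈ (L' i : Set V)) ↔ _
  rw [hL', Set.forall_mem_image]
  simp only [mem_image_units_iff, Module.End.mul_apply, SetLike.mem_coe]

omit [FiniteDimensional F V] [Nontrivial V] [FiniteDimensional F E] [IsDiscreteValuationRing OF]
  [Finite (IsLocalRing.ResidueField OF)] [IsDiscreteValuationRing OE] in
/-- `𝔅(M) = 𝔄(M) ∩ B`. -/
lemma comap_endRestrict_hereditaryOrder_restrictVS
    (hcomp : ∀ x : F, x ∈ OF → algebraMap F E x ∈ OE) (M : ℤ → Submodule OE V) :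
    (hereditaryOrder OF fun i => (M i).restrictVS hcomp).comap (endRestrict F)
      = hereditaryOrder OE M :=
  rfl

theorem hereditaryOrder_restriction_injective_equivariant
    (hcomp : ∀ x : F, x ∈ OF → algebraMap F E x ∈ OE)
    (M M' : ℤ → Submodule OE V) :
    (hereditaryOrder OF (fun i => Submodule.restrictVS hcomp (M i))
        = hereditaryOrder OF (fun i => Submodule.restrictVS hcomp (M' i))
      → hereditaryOrder OE M = hereditaryOrder OE M') ∧
    (∀ h : (Module.End E V)ˣ,
      (hereditaryOrder OF
          (fun i => Submodule.restrictVS hcomp (mapChain (h : Module.End E V) (M i))) :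
        Set (Module.End F V))
        = conjIm (unitRestrict F h)
            (hereditaryOrder OF (fun i => Submodule.restrictVS hcomp (M i)) :
              Set (Module.End F V))) := by
  refine ⟨fun hA => ?_, fun h => hereditaryOrder_eq_conjIm_of_image _ fun i => rfl⟩
  simpa only [comap_endRestrict_hereditaryOrder_restrictVS] using
    congrArg (Subring.comap (endRestrict F (E := E))) hA

end
end
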